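/- arXiv:1810.12491 — 2 statements merged into one kernel-verified Lean document; each statement's English description precedes it below -/
import Mathlib

section
/- Let k be a field and let η_1 > η_2 > … > η_s be strictly decreasing positive integers. For every f ∈ P_η^0 ⊆ k⟦x,y⟧ there exist units c_1, …, c_s of k⟦x,y⟧ such that f = ∏_{i=1}^{s} (y^{η_i} + c_i·x); that is, f factorizes as a product f_1·f_2⋯f_s with each f_i ∈ P_{(η_i)}^0. -/
/-!
Induction on `s`, splitting off the factor `y ^ η₁ + c * x`. Comparing the coefficients of
`x ^ i * y ^ γᵢ`, it suffices to solve the triangular system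
`c * bᵢ + y ^ (η₁ - ηᵢ₊₁) * bᵢ₊₁ = aᵢ` (`1 ≤ i ≤ s`) with `b₁ = 1`, `bₛ₊₁ = 0`; the cofactor
`∑ bᵢ₊₁ xⁱ y^γᵢ₊₁` is then again of the shape `P⁰` for `(η₂, …, ηₛ)`. Eliminating the `bᵢ`, the
condition `b₁ = 1` says that `c` is a root of a monic polynomial which, because `η` strictly
decreases, is `Tˢ⁻¹ (T - a₁)` modulo `(x, y)`. So `a₁` is a simple root there, and Hensel's lemma
(`k⟦x,y⟧` is `(x, y)`-adically complete) lifts it to a unit root `c`.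
-/

open Finset

theorem sum_Icc_one_eq_sum_range {M : Type*} [AddCommMonoid M] (f : ℕ → M) (n : ℕ) :
    ∑ i ∈ Icc 1 n, f i = ∑ i ∈ range n, f (i + 1) := by
  rw [← Ico_add_one_right_eq_Icc, sum_Ico_eq_sum_range]
  simp [add_comm]

theorem prod_Icc_one_eq_prod_range {M : Type*} [CommMonoid M] (f : ℕ → M) (n : ℕ) :
    ∏ i ∈ Icc 1 n, f i = ∏ i ∈ range n, f (i + 1) := by
  rw [← Ico_add_one_right_eq_Icc, prod_Ico_eq_prod_range]
  simp [add_comm]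

section
variable {R : Type*} [CommRing R]

theorem add_mul_sum_range_eq {x y c : R} {η γ : ℕ → ℕ} {b : ℕ → R} {s : ℕ}
    (hη : ∀ i ∈ Icc 2 (s + 1), η i ≤ η 1) (hγ : ∀ i ≤ s, γ i = η (i + 1) + γ (i + 1))
    (hb : b (s + 2) = 0) :
    (y ^ η 1 + c * x) * ∑ i ∈ range (s + 1), b (i + 1) * x ^ i * y ^ γ (i + 1) =
      b 1 * y ^ γ 0 + ∑ i ∈ Icc 1 (s + 1),
        (c * b i + y ^ (η 1 - η (i + 1)) * b (i + 1)) * x ^ i * y ^ γ i := by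
  have hcx : c * x * ∑ i ∈ range (s + 1), b (i + 1) * x ^ i * y ^ γ (i + 1) =
      ∑ i ∈ range (s + 1), c * b (i + 1) * x ^ (i + 1) * y ^ γ (i + 1) := by
    rw [mul_sum]
    exact sum_congr rfl fun i _ => by ring
  have hy : y ^ η 1 * ∑ i ∈ range (s + 1), b (i + 1) * x ^ i * y ^ γ (i + 1) =
      b 1 * y ^ γ 0 + ∑ i ∈ range (s + 1),
        y ^ (η 1 - η (i + 2)) * b (i + 2) * x ^ (i + 1) * y ^ γ (i + 1) := by
    have hsum : ∑ i ∈ range s, y ^ η 1 * (b (i + 2) * x ^ (i + 1) * y ^ γ (i + 2)) =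
        ∑ i ∈ range s, y ^ (η 1 - η (i + 2)) * b (i + 2) * x ^ (i + 1) * y ^ γ (i + 1) := by
      refine sum_congr rfl fun i hi => ?_
      have hi : i < s := mem_range.1 hi
      have hexp : η 1 + γ (i + 2) = η 1 - η (i + 2) + γ (i + 1) := by
        have := hη (i + 2) (by simp only [mem_Icc]; omega)
        have : γ (i + 1) = η (i + 2) + γ (i + 2) := hγ (i + 1) hi
        omega
      linear_combination (b (i + 2) * x ^ (i + 1)) * congrArg (y ^ ·) hexp
    rw [sum_range_succ', sum_range_succ, hb, hγ 0 (Nat.zero_le s), mul_add, mul_sum, hsum]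
    ring
  rw [sum_Icc_one_eq_sum_range, add_mul, hcx, hy]
  simp only [add_mul, sum_add_distrib]
  ring

theorem isUnit_of_sub_mem_of_le_jacobson {I : Ideal R} (hI : I ≤ Ideal.jacobson ⊥) {u v : R}
    (hu : IsUnit u) (h : v - u ∈ I) : IsUnit v := by
  have := isLocalHom_of_le_jacobson_bot I hI
  refine isUnit_of_map_unit (Ideal.Quotient.mk I) _ ?_
  rw [Ideal.Quotient.eq.2 h]
  exact hu.map _

section
open Polynomial

/-- Clearing denominators in `b i = c⁻¹ * (a i - e (i + 1) * b (i + 1))`, `b (n + 1) = 0`: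
`(tailPoly a e n i).eval c = c ^ (n + 1 - i) * b i`, so `b 1 = 1` says that `c` is a root of
`X ^ n - tailPoly a e n 1`. -/
noncomputable def tailPoly (a e : ℕ → R) (n i : ℕ) : R[X] :=
  if n < i then 0 else C (a i) * X ^ (n - i) - C (e (i + 1)) * tailPoly a e n (i + 1)
termination_by n + 1 - i

variable (a e : ℕ → R) (n : ℕ)

theorem tailPoly_of_lt {i : ℕ} (h : n < i) : tailPoly a e n i = 0 := by
  rw [tailPoly, if_pos h]

theorem tailPoly_add_C_mul {i : ℕ} (h : i ≤ n) :
    tailPoly a e n i + C (e (i + 1)) * tailPoly a e n (i + 1) = C (a i) * X ^ (n - i) := by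
  rw [tailPoly, if_neg (not_lt.2 h)]
  ring

theorem natDegree_tailPoly_le (i : ℕ) : (tailPoly a e n i).natDegree ≤ n - i := by
  fun_induction tailPoly a e n i with
  | case1 i h => simp
  | case2 i h ih =>
    refine (natDegree_sub_le _ _).trans (max_le (natDegree_C_mul_X_pow_le _ _) ?_)
    exact (natDegree_C_mul_le _ _).trans (ih.trans (by omega))

variable {a e} {s : ℕ}

theorem monic_X_pow_sub_tailPoly : (X ^ (s + 1) - tailPoly a e (s + 1) 1).Monic := by
  refine monic_X_pow_sub (degree_le_natDegree.trans_lt ?_)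
  exact_mod_cast (natDegree_tailPoly_le a e (s + 1) 1).trans_lt (by omega)

theorem map_X_pow_sub_tailPoly {I : Ideal R} (he : ∀ i ∈ Icc 2 (s + 1), e i ∈ I) :
    (X ^ (s + 1) - tailPoly a e (s + 1) 1).map (Ideal.Quotient.mk I) =
      X ^ s * (X - C (Ideal.Quotient.mk I (a 1))) := by
  have hvanish : (C (e 2) * tailPoly a e (s + 1) 2).map (Ideal.Quotient.mk I) = 0 := by
    rcases s with _ | s
    · rw [tailPoly_of_lt a e _ (by omega), mul_zero, Polynomial.map_zero]
    · rw [Polynomial.map_mul, map_C, Ideal.Quotient.eq_zero_iff_mem.2 (he 2 (by simp)),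
        C_0, zero_mul]
  rw [← sub_add_cancel (tailPoly a e (s + 1) 1) (-(C (e 2) * tailPoly a e (s + 1) 2)),
    sub_neg_eq_add, tailPoly_add_C_mul a e (s + 1) le_add_self]
  simp only [Polynomial.map_sub, Polynomial.map_add, Polynomial.map_neg, hvanish,
    Polynomial.map_mul, Polynomial.map_pow, map_X, map_C, Nat.add_sub_cancel]
  ring

theorem exists_isUnit_isRoot_X_pow_sub_tailPoly {I : Ideal R} [HenselianRing R I]
    (he : ∀ i ∈ Icc 2 (s + 1), e i ∈ I) (ha : IsUnit (a 1)) :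
    ∃ c, IsUnit c ∧ (X ^ (s + 1) - tailPoly a e (s + 1) 1).IsRoot c := by
  have hmap := map_X_pow_sub_tailPoly (a := a) he
  obtain ⟨c, hroot, hc⟩ :=
    HenselianRing.is_henselian (I := I) _ monic_X_pow_sub_tailPoly (a 1)
    (by
      rw [← Ideal.Quotient.eq_zero_iff_mem, ← eval₂_at_apply, ← eval_map, hmap]
      simp)
    (by
      rw [← eval₂_at_apply, ← eval_map, ← derivative_map, hmap]
      simpa using (ha.map _).pow s)
  exact ⟨c, isUnit_of_sub_mem_of_le_jacobson (HenselianRing.jac (I := I)) ha hc, hroot⟩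

theorem exists_bidiagonal_solution_of_isRoot {c : R} (hc : IsUnit c)
    (hroot : (X ^ (s + 1) - tailPoly a e (s + 1) 1).IsRoot c) :
    ∃ b : ℕ → R, b 1 = 1 ∧ b (s + 2) = 0 ∧
      ∀ i ∈ Icc 1 (s + 1), c * b i + e (i + 1) * b (i + 1) = a i := by
  obtain ⟨u, rfl⟩ := hc
  have huv : (u : R) * ↑u⁻¹ = 1 := u.mul_inv
  refine ⟨fun i => (tailPoly a e (s + 1) i).eval ↑u * ↑u⁻¹ ^ (s + 2 - i), ?_, ?_, ?_⟩
  · have h1 := hroot.eq_zero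
    rw [eval_sub, eval_pow, eval_X, sub_eq_zero] at h1
    simp only [← h1, show s + 2 - 1 = s + 1 by omega, ← mul_pow, huv, one_pow]
  · simp [tailPoly_of_lt]
  · intro i hi
    obtain ⟨hi1, hi2⟩ := mem_Icc.1 hi
    have h := congrArg (eval (u : R)) (tailPoly_add_C_mul a e (s + 1) hi2)
    simp only [eval_add, eval_mul, eval_C, eval_pow, eval_X] at h
    have hm : (u : R) ^ (s + 1 - i) * ↑u⁻¹ ^ (s + 1 - i) = 1 := by
      rw [← mul_pow, huv, one_pow]
    simp only [show s + 2 - i = s + 1 - i + 1 by omega,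
      show s + 2 - (i + 1) = s + 1 - i by omega]
    linear_combination (↑u⁻¹ ^ (s + 1 - i) : R) * h
      + (tailPoly a e (s + 1) i).eval ↑u * ↑u⁻¹ ^ (s + 1 - i) * huv + a i * hm

theorem exists_isUnit_bidiagonal_solution {I : Ideal R} [HenselianRing R I]
    (he : ∀ i ∈ Icc 2 (s + 1), e i ∈ I) (ha : ∀ i ∈ Icc 1 (s + 1), IsUnit (a i)) :
    ∃ (c : R) (b : ℕ → R), IsUnit c ∧ b 1 = 1 ∧ b (s + 2) = 0 ∧
      (∀ i ∈ Icc 2 (s + 1), IsUnit (b i)) ∧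
      ∀ i ∈ Icc 1 (s + 1), c * b i + e (i + 1) * b (i + 1) = a i := by
  obtain ⟨c, hc, hroot⟩ := exists_isUnit_isRoot_X_pow_sub_tailPoly he (ha 1 (by simp))
  obtain ⟨b, hb1, hbtop, hrel⟩ := exists_bidiagonal_solution_of_isRoot hc hroot
  refine ⟨c, b, hc, hb1, hbtop, fun i hi => ?_, hrel⟩
  obtain ⟨hi2, his⟩ := mem_Icc.1 hi
  have hcb : c * b i = a i - e (i + 1) * b (i + 1) :=
    eq_sub_of_add_eq (hrel i (mem_Icc.2 ⟨by omega, his⟩))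
  have hsmall : e (i + 1) * b (i + 1) ∈ I := by
    rcases his.lt_or_eq with hlt | rfl
    · exact I.mul_mem_right _ (he _ (mem_Icc.2 ⟨by omega, by omega⟩))
    · rw [hbtop, mul_zero]
      exact I.zero_mem
  refine isUnit_of_mul_isUnit_right (x := c) ?_
  rw [hcb]
  exact isUnit_of_sub_mem_of_le_jacobson (HenselianRing.jac (I := I))
    (ha i (mem_Icc.2 ⟨by omega, his⟩)) (by simpa using I.neg_mem hsmall)

end

theorem exists_eq_prod_of_henselianRing {I : Ideal R} [HenselianRing R I] {x y : R}
    (hy : y ∈ I) (s : ℕ) (η : ℕ → ℕ) (hη : StrictAntiOn η (Icc 1 s)) (γ : ℕ → ℕ)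
    (hγ : ∀ i < s, γ i = η (i + 1) + γ (i + 1)) (hγs : γ s = 0)
    (a : ℕ → R) (ha : ∀ i ∈ Icc 1 s, IsUnit (a i)) :
    ∃ c : ℕ → R, (∀ i ∈ Icc 1 s, IsUnit (c i)) ∧
      y ^ γ 0 + ∑ i ∈ Icc 1 s, a i * x ^ i * y ^ γ i = ∏ i ∈ Icc 1 s, (y ^ η i + c i * x) := by
  induction s generalizing η γ a with
  | zero => exact ⟨fun _ => 1, by simp, by simp [hγs]⟩
  | succ s ih =>
    have hη1 : ∀ i ∈ Icc 2 (s + 1), η i < η 1 := fun i hi =>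
      have hi := mem_Icc.1 hi
      hη (by simp) (by simp only [coe_Icc, Set.mem_Icc]; omega) (by omega)
    obtain ⟨c, b, hc, hb1, hbtop, hb, hrel⟩ := exists_isUnit_bidiagonal_solution (a := a)
      (e := fun i => y ^ (η 1 - η i))
      (fun i hi => I.pow_mem_of_mem hy _ (Nat.sub_pos_of_lt (hη1 i hi))) ha
    have hηsucc : StrictAntiOn (fun i => η (i + 1)) (Icc 1 s) := fun i hi j hj hij =>
      hη (by simp only [coe_Icc, Set.mem_Icc] at hi ⊢; omega)
        (by simp only [coe_Icc, Set.mem_Icc] at hj ⊢; omega) (by omega)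
    obtain ⟨c', hc', hfac⟩ := ih (fun i => η (i + 1)) hηsucc (fun i => γ (i + 1))
      (fun i hi => hγ (i + 1) (by omega)) hγs (fun i => b (i + 1))
      (fun i hi => hb (i + 1) (by simp only [mem_Icc] at hi ⊢; omega))
    refine ⟨fun i => if i = 1 then c else c' (i - 1), fun i hi => ?_, ?_⟩
    · rcases eq_or_ne i 1 with rfl | hi1
      · simpa using hc
      · simp only [hi1, if_false]
        exact hc' _ (by simp only [mem_Icc] at hi ⊢; omega)
    have hcof : ∑ i ∈ range (s + 1), b (i + 1) * x ^ i * y ^ γ (i + 1) =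
        y ^ γ 1 + ∑ i ∈ Icc 1 s, b (i + 1) * x ^ i * y ^ γ (i + 1) := by
      rw [sum_range_succ', sum_Icc_one_eq_sum_range, zero_add, hb1]
      ring
    calc y ^ γ 0 + ∑ i ∈ Icc 1 (s + 1), a i * x ^ i * y ^ γ i
        = (y ^ η 1 + c * x) * ∑ i ∈ range (s + 1), b (i + 1) * x ^ i * y ^ γ (i + 1) := by
          rw [add_mul_sum_range_eq (fun i hi => (hη1 i hi).le) (fun i hi => hγ i (by omega))
            hbtop, hb1, one_mul]
          exact congrArg _ (sum_congr rfl fun i hi => by rw [hrel i hi])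
      _ = (y ^ η 1 + c * x) * ∏ i ∈ Icc 1 s, (y ^ η (i + 1) + c' i * x) := by rw [hcof, hfac]
      _ = ∏ i ∈ Icc 1 (s + 1), (y ^ η i + (if i = 1 then c else c' (i - 1)) * x) := by
          rw [prod_Icc_one_eq_prod_range _ (s + 1), prod_range_succ',
            prod_Icc_one_eq_prod_range _ s, mul_comm]
          simp

end

open MvPowerSeries

theorem stmt_2_general (k : Type*) [Field k] (s : ℕ)
    (η : ℕ → ℕ)
    (hηstrict : ∀ i ∈ Finset.Icc 1 s, ∀ j ∈ Finset.Icc 1 s, i < j → η j < η i)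
    (γ : ℕ → ℕ) (hγ : ∀ i, γ i = ∑ t ∈ Finset.Icc (i + 1) s, η t)
    (a : ℕ → MvPowerSeries (Fin 2) k) (ha : ∀ i ∈ Finset.Icc 1 s, IsUnit (a i))
    (f : MvPowerSeries (Fin 2) k)
    (hf : f = (X 1 : MvPowerSeries (Fin 2) k) ^ γ 0
      + ∑ i ∈ Finset.Icc 1 s, a i * (X 0 : MvPowerSeries (Fin 2) k) ^ i
          * (X 1 : MvPowerSeries (Fin 2) k) ^ γ i) :
    ∃ c : ℕ → MvPowerSeries (Fin 2) k,
      (∀ i ∈ Finset.Icc 1 s, IsUnit (c i)) ∧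
      f = ∏ i ∈ Finset.Icc 1 s,
        ((X 1 : MvPowerSeries (Fin 2) k) ^ η i + c i * (X 0 : MvPowerSeries (Fin 2) k)) := by
  have hγsucc : ∀ i < s, γ i = η (i + 1) + γ (i + 1) := fun i hi => by
    rw [hγ, hγ, ← insert_Icc_add_one_left_eq_Icc (by omega : i + 1 ≤ s), sum_insert (by simp)]
  have hγs : γ s = 0 := by simp [hγ]
  subst hf
  exact exists_eq_prod_of_henselianRing (I := Ideal.span (Set.range X))
    (Ideal.subset_span ⟨1, rfl⟩) s η hηstrict γ hγsucc hγs a ha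

/-- Existence part of the factorization lemma: for strictly decreasing `η₁ > … > η_s`,
every `f ∈ P_η⁰ ⊆ k⟦x,y⟧` factorizes as `f = ∏ᵢ (y^{ηᵢ} + cᵢ·x)` with the `cᵢ` units. -/
theorem stmt_2 (k : Type*) [Field k] (s : ℕ)
    (η : ℕ → ℕ) (hηpos : ∀ i ∈ Finset.Icc 1 s, 0 < η i)
    (hηstrict : ∀ i ∈ Finset.Icc 1 s, ∀ j ∈ Finset.Icc 1 s, i < j → η j < η i)
    (γ : ℕ → ℕ) (hγ : ∀ i, γ i = ∑ t ∈ Finset.Icc (i + 1) s, η t)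
    (a : ℕ → MvPowerSeries (Fin 2) k) (ha : ∀ i ∈ Finset.Icc 1 s, IsUnit (a i))
    (f : MvPowerSeries (Fin 2) k)
    (hf : f = (X 1 : MvPowerSeries (Fin 2) k) ^ γ 0
      + ∑ i ∈ Finset.Icc 1 s, a i * (X 0 : MvPowerSeries (Fin 2) k) ^ i
          * (X 1 : MvPowerSeries (Fin 2) k) ^ γ i) :
    ∃ c : ℕ → MvPowerSeries (Fin 2) k,
      (∀ i ∈ Finset.Icc 1 s, IsUnit (c i)) ∧
      f = ∏ i ∈ Finset.Icc 1 s,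
        ((X 1 : MvPowerSeries (Fin 2) k) ^ η i + c i * (X 0 : MvPowerSeries (Fin 2) k)) :=
  stmt_2_general k s η hηstrict γ hγ a ha f hf
end

section
/- Let k be a field, m ≥ 1 an integer, and a a unit of k⟦x,y⟧. Then the k-algebra homomorphism from the one-variable power series ring k⟦t⟧ to the quotient ring k⟦x,y⟧/(y^m + a·x) that sends t to the residue class of y is bijective. In particular, k⟦x,y⟧/(y^m + a·x) is an integral domain and the ideal generated by y^m + a·x is prime. -/
/-!
View `k⟦x,y⟧` as `A⟦x⟧` with `A = k⟦y⟧`. Modulo the maximal ideal `(y)` of `A`, the series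
`y^m + a·x` becomes `a(x,0)·x`, of `x`-order one with unit linear coefficient, so Weierstrass
division by it leaves remainders of `x`-degree zero, that is, elements of `A`, and does so
uniquely. Hence `A → A⟦x⟧/(y^m + a·x)` is an isomorphism.
-/

open MvPowerSeries

namespace PowerSeries

variable {A : Type*} [CommRing A] {I : Ideal A} {g : PowerSeries A}

theorem order_map_mk_eq_one (hI : I ≠ ⊤) (hg₀ : constantCoeff g ∈ I)
    (hg₁ : IsUnit (coeff 1 g)) : (g.map (Ideal.Quotient.mk I)).order = 1 := by
  have : Nontrivial (A ⧸ I) := Ideal.Quotient.nontrivial_iff.mpr hI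
  refine order_eq_nat.mpr ⟨?_, fun i hi => ?_⟩
  · rw [coeff_map]
    exact (hg₁.map _).ne_zero
  · rw [Nat.lt_one_iff.mp hi, coeff_map, coeff_zero_eq_constantCoeff_apply,
      Ideal.Quotient.eq_zero_iff_mem]
    exact hg₀

theorem bijective_algebraMap_quotient_span_singleton [Nontrivial A] [IsAdicComplete I A]
    (hg₀ : constantCoeff g ∈ I) (hg₁ : IsUnit (coeff 1 g)) :
    Function.Bijective (algebraMap A (A⟦X⟧ ⧸ Ideal.span {g})) := by
  have hI : I ≠ ⊤ := by
    rintro rfl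
    exact not_subsingleton A ‹IsAdicComplete ⊤ A›.toIsHausdorff.subsingleton
  have hord : (g.map (Ideal.Quotient.mk I)).order.toNat = 1 := by
    rw [order_map_mk_eq_one hI hg₀ hg₁, ENat.toNat_one]
  have H : g.IsWeierstrassDivisorAt I := by rwa [IsWeierstrassDivisorAt, hord]
  have hmap : ∀ a, algebraMap A (A⟦X⟧ ⧸ Ideal.span {g}) a = Ideal.Quotient.mk _ (C a) :=
    fun _ => rfl
  refine ⟨(injective_iff_map_eq_zero _).mpr fun a ha => ?_, fun f => ?_⟩
  · rw [hmap, Ideal.Quotient.eq_zero_iff_mem, Ideal.mem_span_singleton'] at ha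
    obtain ⟨q, hq⟩ := ha
    have hdeg : (Polynomial.C a).degree < (g.map (Ideal.Quotient.mk I)).order.toNat := by
      rw [hord, Nat.cast_one, Nat.WithBot.lt_one_iff_le_zero]
      exact Polynomial.degree_C_le
    simpa using (H.eq_zero_of_mul_eq hdeg (by rw [mul_comm, hq, Polynomial.coe_C])).2
  · obtain ⟨f, rfl⟩ := Ideal.Quotient.mk_surjective f
    obtain ⟨hr, hf⟩ := H.isWeierstrassDivisionAt_div_mod f
    rw [hord, Nat.cast_one, Nat.WithBot.lt_one_iff_le_zero, Polynomial.degree_le_zero_iff] at hr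
    generalize H.mod f = r at hr hf
    obtain ⟨c, rfl⟩ : ∃ c, r = Polynomial.C c := ⟨_, hr⟩
    refine ⟨c, ?_⟩
    rw [hmap, Ideal.Quotient.eq, Ideal.mem_span_singleton', hf, Polynomial.coe_C]
    exact ⟨-H.div f, by ring⟩

end PowerSeries

namespace MvPowerSeries

variable {R : Type*}

theorem coeff_renameEquiv_finOneEquiv_symm [CommSemiring R] (f : PowerSeries R)
    (x : Fin 1 →₀ ℕ) :
    coeff x (renameEquiv R finOneEquiv.symm f) = PowerSeries.coeff (x 0) f := by
  have hx : x = Finsupp.embDomain finOneEquiv.symm.toEmbedding (Finsupp.single () (x 0)) := by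
    ext
    simp [Fin.fin_one_eq_zero]
  conv_lhs => rw [hx]
  exact coeff_embDomain_rename _ f _

theorem finSuccEquiv_eq_C_of_coeff [CommSemiring R] {p : MvPowerSeries (Fin 2) R}
    {f : PowerSeries R}
    (hp : ∀ d, coeff d p = if d 0 = 0 then PowerSeries.coeff (d 1) f else 0) :
    finSuccEquiv R 1 p = PowerSeries.C (renameEquiv R finOneEquiv.symm f) := by
  ext n x
  have h₁ : (x.cons n) 1 = x 0 := Finsupp.cons_succ (0 : Fin 1) n x
  rw [coeff_coeff_finSuccEquiv, hp, Finsupp.cons_zero, h₁, PowerSeries.coeff_C]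
  split_ifs
  · exact (coeff_renameEquiv_finOneEquiv_symm f x).symm
  · exact (map_zero _).symm

theorem finSuccEquiv_X_one_pow_add_mul_X_zero [CommSemiring R] (m : ℕ)
    (a : MvPowerSeries (Fin 2) R) :
    finSuccEquiv R 1 (X 1 ^ m + a * X 0) =
      PowerSeries.C (X 0) ^ m + finSuccEquiv R 1 a * PowerSeries.X := by
  rw [map_add, map_mul, map_pow, finSuccEquiv_X_zero, ← Fin.succ_zero_eq_one,
    finSuccEquiv_X_succ]

variable [CommRing R] {m : ℕ} {a : MvPowerSeries (Fin 2) R}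

theorem constantCoeff_finSuccEquiv_X_one_pow_add_mul_X_zero_mem (hm : 1 ≤ m) :
    PowerSeries.constantCoeff (finSuccEquiv R 1 (X 1 ^ m + a * X 0)) ∈
      Ideal.span (Set.range X) := by
  rw [finSuccEquiv_X_one_pow_add_mul_X_zero, map_add, map_mul, PowerSeries.constantCoeff_X,
    mul_zero, add_zero, map_pow, PowerSeries.constantCoeff_C]
  exact Ideal.pow_mem_of_mem _ (Ideal.subset_span (Set.mem_range_self 0)) m hm

theorem isUnit_coeff_one_finSuccEquiv_X_one_pow_add_mul_X_zero (ha : IsUnit a) :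
    IsUnit (PowerSeries.coeff 1 (finSuccEquiv R 1 (X 1 ^ m + a * X 0))) := by
  rw [finSuccEquiv_X_one_pow_add_mul_X_zero, map_add, ← map_pow, PowerSeries.coeff_C,
    if_neg one_ne_zero, zero_add, PowerSeries.coeff_succ_mul_X,
    PowerSeries.coeff_zero_eq_constantCoeff_apply]
  exact (ha.map _).map _

end MvPowerSeries

/-- Each formal branch `k⟦x,y⟧/(y^m + a·x)` (with `a` a unit, `m ≥ 1`) is a smooth formal
disk: the `k`-algebra homomorphism `k⟦t⟧ → k⟦x,y⟧/(y^m + a·x)` sending `t` to the class of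
`y` (concretely, `Σ cₙ tⁿ ↦ Σ cₙ yⁿ mod (y^m + a·x)`, described coefficientwise by `ψ`) is
bijective; in particular the quotient is an integral domain and `(y^m + a·x)` is prime. -/
theorem stmt_4 (k : Type*) [Field k] (m : ℕ) (hm : 1 ≤ m)
    (a : MvPowerSeries (Fin 2) k) (ha : IsUnit a)
    (I : Ideal (MvPowerSeries (Fin 2) k))
    (hI : I = Ideal.span
      {(X 1 : MvPowerSeries (Fin 2) k) ^ m + a * (X 0 : MvPowerSeries (Fin 2) k)})
    (ψ : PowerSeries k → MvPowerSeries (Fin 2) k)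
    (hψ : ∀ (f : PowerSeries k) (d : Fin 2 →₀ ℕ),
      MvPowerSeries.coeff d (ψ f) = if d 0 = 0 then PowerSeries.coeff (d 1) f else 0) :
    ∃ φ : PowerSeries k →ₐ[k] (MvPowerSeries (Fin 2) k ⧸ I),
      (∀ f, φ f = Ideal.Quotient.mk I (ψ f)) ∧ Function.Bijective φ
      ∧ IsDomain (MvPowerSeries (Fin 2) k ⧸ I) ∧ I.IsPrime := by
  set e := finSuccEquiv k 1
  set J := Ideal.span {e (X 1 ^ m + a * X 0)}
  have hJ : J = I.map e := by rw [hI, Ideal.map_span, Set.image_singleton]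
  let quot := Ideal.quotientEquivAlg I J e hJ
  let ι := renameEquiv k finOneEquiv.symm
  let φ : PowerSeries k →ₐ[k] (MvPowerSeries (Fin 2) k ⧸ I) :=
    quot.symm.toAlgHom.comp
      ((IsScalarTower.toAlgHom k (MvPowerSeries (Fin 1) k) _).comp ι.toAlgHom)
  have hφ : ∀ f, φ f = Ideal.Quotient.mk I (ψ f) := fun f => by
    change quot.symm _ = _
    rw [AlgEquiv.symm_apply_eq, Ideal.quotientEquivAlg_mk J e hJ,
      finSuccEquiv_eq_C_of_coeff (hψ f)]
    rfl
  have hbij : Function.Bijective φ :=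
    quot.symm.bijective.comp ((PowerSeries.bijective_algebraMap_quotient_span_singleton
      (constantCoeff_finSuccEquiv_X_one_pow_add_mul_X_zero_mem hm)
      (isUnit_coeff_one_finSuccEquiv_X_one_pow_add_mul_X_zero ha)).comp ι.bijective)
  have hdom : IsDomain (MvPowerSeries (Fin 2) k ⧸ I) :=
    MulEquiv.isDomain (PowerSeries k) (AlgEquiv.ofBijective φ hbij).symm.toMulEquiv
  exact ⟨φ, hφ, hbij, hdom, (Ideal.Quotient.isDomain_iff_prime I).mp hdom⟩
end
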